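/- If a hereditary class of graphs 𝒢 satisfies χ(G) ≤ ω(G)^d for all G ∈ 𝒢 (for some fixed d ≥ 1), then every G ∈ 𝒢 with at least one vertex satisfies max(α(G), ω(G)) ≥ |G|^{1/(d+1)}. -/
import Mathlib


open SimpleGraph

/-- The chromatic number of the subgraph of `G` induced on `S`, as a natural number. -/
noncomputable def chiS {V : Type*} [Fintype V] (G : SimpleGraph V) (S : Set V) : ℕ :=
  (G.induce S).chromaticNumber.toNat

/-- The clique number of a graph. -/
noncomputable def omegaNum {V : Type*} (G : SimpleGraph V) : ℕ :=
  sSup {n | ∃ t : Finset V, G.IsNClique n t}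

/-- The stability (independence) number of a graph. -/
noncomputable def alphaNum {V : Type*} (G : SimpleGraph V) : ℕ :=
  sSup {n | ∃ t : Finset V, Gᶜ.IsNClique n t}

lemma omegaNum_eq {V : Type*} (G : SimpleGraph V) : omegaNum G = G.cliqueNum := by
  simp [omegaNum, SimpleGraph.cliqueNum]

lemma alphaNum_eq {V : Type*} (G : SimpleGraph V) : alphaNum G = Gᶜ.cliqueNum := by
  simp [alphaNum, SimpleGraph.cliqueNum]

lemma card_le_alpha_mul_chi {V : Type*} [Fintype V] (G : SimpleGraph V) [DecidableEq V] :
    Fintype.card V ≤ alphaNum G * chiS G Set.univ := by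
  classical
  set k := chiS G Set.univ with hk
  have hcol : (G.induce Set.univ).Colorable k :=
    SimpleGraph.colorable_chromaticNumber_of_fintype _
  obtain ⟨C0⟩ := hcol
  let C : G.Coloring (Fin k) := C0.comp (G.induceUnivIso).symm.toHom
  have hcard : Fintype.card V =
      ∑ i : Fin k, (Finset.univ.filter (fun v => C v = i)).card := by
    rw [← Finset.card_univ]
    exact Finset.card_eq_sum_card_fiberwise (fun v _ => Finset.mem_univ (C v))
  have hfib : ∀ i : Fin k, (Finset.univ.filter (fun v => C v = i)).card ≤ alphaNum G := by
    intro i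
    rw [alphaNum_eq]
    refine SimpleGraph.IsClique.card_le_cliqueNum (tc := ?_)
    intro u hu v hv huv
    simp only [Finset.coe_filter, Set.mem_setOf_eq] at hu hv
    refine ⟨huv, fun hadj => ?_⟩
    exact C.valid hadj (hu.2.trans hv.2.symm)
  calc Fintype.card V = ∑ i : Fin k, (Finset.univ.filter (fun v => C v = i)).card := hcard
    _ ≤ ∑ _i : Fin k, alphaNum G := Finset.sum_le_sum fun i _ => hfib i
    _ = k * alphaNum G := by simp [Finset.sum_const, Finset.card_univ]
    _ = alphaNum G * k := Nat.mul_comm _ _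

theorem stmt_5.{u} (d : ℝ) (hd : 1 ≤ d)
    (𝒢 : ∀ (W : Type u) [Fintype W], SimpleGraph W → Prop)
    -- 𝒢 is hereditary: closed under isomorphism and under taking induced subgraphs
    (hiso : ∀ (W W' : Type u) [Fintype W] [Fintype W']
      (G : SimpleGraph W) (G' : SimpleGraph W'),
      𝒢 W G → Nonempty (G ≃g G') → 𝒢 W' G')
    (hind : ∀ (W : Type u) [Fintype W] (G : SimpleGraph W) (S : Set W),
      𝒢 W G → @𝒢 ↥S (Fintype.ofFinite ↥S) (G.induce S))
    -- polynomial χ-bounding hypothesis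
    (hbound : ∀ (W : Type u) [Fintype W] (G : SimpleGraph W),
      𝒢 W G → (chiS G Set.univ : ℝ) ≤ (omegaNum G : ℝ) ^ d) :
    ∀ (V : Type u) [Fintype V] (G : SimpleGraph V), 𝒢 V G → 0 < Fintype.card V →
      (Fintype.card V : ℝ) ^ ((1 : ℝ) / (d + 1)) ≤ (max (alphaNum G) (omegaNum G) : ℝ) := by
  intro V _ G hG hpos
  classical
  set m : ℕ := max (alphaNum G) (omegaNum G) with hm
  have hm0 : (0 : ℝ) ≤ (m : ℝ) := Nat.cast_nonneg _
  have hd1 : (0 : ℝ) < d + 1 := by linarith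
  -- key: n ≤ m ^ (d+1)
  have hαm : (alphaNum G : ℝ) ≤ (m : ℝ) := by exact_mod_cast le_max_left _ _
  have hωm : (omegaNum G : ℝ) ≤ (m : ℝ) := by exact_mod_cast le_max_right _ _
  have hχ : (chiS G Set.univ : ℝ) ≤ (m : ℝ) ^ d := by
    refine (hbound V G hG).trans ?_
    exact Real.rpow_le_rpow (Nat.cast_nonneg _) hωm (by linarith)
  have hkey : (Fintype.card V : ℝ) ≤ (m : ℝ) ^ (d + 1) := by
    have h1 : (Fintype.card V : ℝ) ≤ (alphaNum G : ℝ) * (chiS G Set.univ : ℝ) := by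
      exact_mod_cast card_le_alpha_mul_chi G
    have h2 : (alphaNum G : ℝ) * (chiS G Set.univ : ℝ) ≤ (m : ℝ) * (m : ℝ) ^ d := by
      apply mul_le_mul hαm hχ (Nat.cast_nonneg _) hm0
    have h3 : (m : ℝ) * (m : ℝ) ^ d = (m : ℝ) ^ (d + 1) := by
      rw [Real.rpow_add_one' hm0 (by linarith)]
      ring
    linarith [h1, h2, h3.symm.le.trans_eq rfl, h3 ▸ h2]
  have := Real.rpow_le_rpow (Nat.cast_nonneg (Fintype.card V)) hkey (le_of_lt (by positivity : (0:ℝ) < 1/(d+1)))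
  calc (Fintype.card V : ℝ) ^ ((1 : ℝ) / (d + 1))
      ≤ ((m : ℝ) ^ (d + 1)) ^ ((1 : ℝ) / (d + 1)) := this
    _ = (m : ℝ) := by
        rw [← Real.rpow_mul hm0, mul_one_div, div_self (ne_of_gt hd1), Real.rpow_one]
    _ = max (alphaNum G : ℝ) (omegaNum G : ℝ) := by rw [hm]; push_cast; rfl
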